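/- arXiv:1811.03375 — 5 statements merged into one kernel-verified Lean document; each statement's English description precedes it below -/
import Mathlib

section
/- Let q be a prime power, A ⊆ F_q^* of cardinality A ≥ 1, t a positive integer, and B a (t,A,q)-packing set of cardinality B. Then B < t·(q^{1/t}/A + 1). -/
/-- `B` is a `(t, A, q)`-packing set in the finite field `F` (of `q` elements):
`B` is a nonempty set of nonzero elements such that for every `x ∈ F` there is at
most one vector `a = (a_b)_{b ∈ B}` with entries in `A ∪ {0}` and Hamming weight
at most `t` with `∑_{b ∈ B} a_b • b = x`. -/
def IsPackingSet {F : Type*} [Field F] [DecidableEq F]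
    (A : Finset F) (t : ℕ) (B : Finset F) : Prop :=
  B.Nonempty ∧ (0 : F) ∉ B ∧
    ∀ a₁ a₂ : F → F,
      (∀ b ∈ B, a₁ b ∈ A ∨ a₁ b = 0) → (∀ b ∈ B, a₂ b ∈ A ∨ a₂ b = 0) →
      (B.filter fun b => a₁ b ≠ 0).card ≤ t →
      (B.filter fun b => a₂ b ≠ 0).card ≤ t →
      (∑ b ∈ B, a₁ b * b) = (∑ b ∈ B, a₂ b * b) →
      ∀ b ∈ B, a₁ b = a₂ b

/-- A maximal `(t, A, q)`-packing set: no nonzero element outside `B` can be adjoined. -/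
def IsMaximalPackingSet {F : Type*} [Field F] [DecidableEq F]
    (A : Finset F) (t : ℕ) (B : Finset F) : Prop :=
  IsPackingSet A t B ∧
    ∀ u : F, u ≠ 0 → u ∉ B → ¬ IsPackingSet A t (insert u B)

/-! The vectors of weight exactly `t` supported in `B` with entries in `A`, together with the zero
vector, have pairwise distinct syndromes, so `C(|B|, t) |A|^t + 1 ≤ q`. When `t ≤ |B|`, the estimate
`|B|^t ≤ t^t C(|B|, t)` turns this into `(|B| |A| / t)^t < q`; when `|B| < t` the bound is trivial. -/

theorem pow_le_pow_mul_choose {n t : ℕ} (htn : t ≤ n) : n ^ t ≤ t ^ t * n.choose t := by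
  have hprod : ∏ i ∈ Finset.range t, n * (t - i) ≤ ∏ i ∈ Finset.range t, t * (n - i) :=
    Finset.prod_le_prod' fun i _ => by
      rw [Nat.mul_sub, Nat.mul_sub, mul_comm t n]
      exact Nat.sub_le_sub_left (Nat.mul_le_mul_right i htn) _
  rw [Finset.prod_mul_distrib, Finset.prod_mul_distrib, Finset.prod_const, Finset.prod_const,
    Finset.card_range, ← Nat.descFactorial_eq_prod_range, ← Nat.descFactorial_eq_prod_range,
    Nat.descFactorial_self, Nat.descFactorial_eq_factorial_mul_choose, mul_comm, mul_left_comm]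
    at hprod
  exact Nat.le_of_mul_le_mul_left hprod (Nat.factorial_pos t)

theorem lt_mul_rpow_div_of_pow_mul_pow_lt {n a t q : ℕ} (ht : 0 < t) (ha : 0 < a)
    (h : n ^ t * a ^ t < t ^ t * q) :
    (n : ℝ) < t * (q : ℝ) ^ ((1 : ℝ) / t) / a := by
  have htR : (0 : ℝ) < t := by exact_mod_cast ht
  have haR : (0 : ℝ) < a := by exact_mod_cast ha
  have hpow : (n * a / t : ℝ) ^ (t : ℝ) < q := by
    rw [Real.rpow_natCast, div_pow, mul_pow, div_lt_iff₀ (by positivity)]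
    exact_mod_cast h.trans_eq (mul_comm _ _)
  have hroot := (Real.lt_rpow_inv_iff_of_pos (by positivity) (Nat.cast_nonneg q) htR).mpr hpow
  rw [one_div, lt_div_iff₀ haR]
  rw [div_lt_iff₀ htR] at hroot
  linarith

section Packing

variable {F : Type*} [Field F] [Fintype F] [DecidableEq F]

def vectorsWithSupport (A T : Finset F) : Finset (F → F) :=
  Fintype.piFinset fun b => if b ∈ T then A else {0}

variable {A B T : Finset F} {g : F → F} {b : F} {t : ℕ}

theorem card_vectorsWithSupport : (vectorsWithSupport A T).card = A.card ^ T.card := by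
  rw [vectorsWithSupport, Fintype.card_piFinset]
  simp only [apply_ite Finset.card, Finset.card_singleton]
  rw [Finset.prod_ite_mem, Finset.univ_inter, Finset.prod_const]

theorem apply_mem_of_mem_vectorsWithSupport (hg : g ∈ vectorsWithSupport A T) (hb : b ∈ T) :
    g b ∈ A := by
  simpa [hb] using Fintype.mem_piFinset.mp hg b

theorem apply_eq_zero_of_mem_vectorsWithSupport (hg : g ∈ vectorsWithSupport A T) (hb : b ∉ T) :
    g b = 0 := by
  simpa [hb] using Fintype.mem_piFinset.mp hg b

theorem apply_ne_zero_iff_of_mem_vectorsWithSupport (hA0 : (0 : F) ∉ A)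
    (hg : g ∈ vectorsWithSupport A T) : g b ≠ 0 ↔ b ∈ T :=
  ⟨fun h => by_contra fun hb => h (apply_eq_zero_of_mem_vectorsWithSupport hg hb),
    fun hb h => hA0 (h ▸ apply_mem_of_mem_vectorsWithSupport hg hb)⟩

theorem pairwiseDisjoint_vectorsWithSupport (hA0 : (0 : F) ∉ A) (𝒯 : Set (Finset F)) :
    𝒯.PairwiseDisjoint (vectorsWithSupport A) := by
  intro T₁ _ T₂ _ hne
  refine Finset.disjoint_left.mpr fun g hg₁ hg₂ => hne ?_
  ext b
  rw [← apply_ne_zero_iff_of_mem_vectorsWithSupport hA0 hg₁,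
    ← apply_ne_zero_iff_of_mem_vectorsWithSupport hA0 hg₂]

theorem IsPackingSet.injOn_syndrome (hB : IsPackingSet A t B) {𝒯 : Finset (Finset F)}
    (h𝒯 : ∀ T ∈ 𝒯, T ⊆ B ∧ T.card ≤ t) :
    Set.InjOn (fun g : F → F => ∑ b ∈ B, g b * b) (𝒯.biUnion (vectorsWithSupport A)) := by
  have hvec : ∀ g ∈ 𝒯.biUnion (vectorsWithSupport A), (∀ b ∉ B, g b = 0) ∧
      (∀ b ∈ B, g b ∈ A ∨ g b = 0) ∧ (B.filter fun b => g b ≠ 0).card ≤ t := by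
    intro g hg
    obtain ⟨T, hT, hgT⟩ := Finset.mem_biUnion.mp hg
    have hzero : ∀ b ∉ T, g b = 0 := fun b => apply_eq_zero_of_mem_vectorsWithSupport hgT
    refine ⟨fun b hb => hzero b fun hbT => hb ((h𝒯 T hT).1 hbT), fun b _ => ?_, ?_⟩
    · by_cases hbT : b ∈ T
      · exact Or.inl (apply_mem_of_mem_vectorsWithSupport hgT hbT)
      · exact Or.inr (hzero b hbT)
    · refine (Finset.card_le_card fun b hb => ?_).trans (h𝒯 T hT).2
      exact by_contra fun hbT => (Finset.mem_filter.mp hb).2 (hzero b hbT)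
  intro g₁ hg₁ g₂ hg₂ hsyn
  obtain ⟨hout₁, hA₁, hwt₁⟩ := hvec g₁ hg₁
  obtain ⟨hout₂, hA₂, hwt₂⟩ := hvec g₂ hg₂
  have hon := hB.2.2 g₁ g₂ hA₁ hA₂ hwt₁ hwt₂ hsyn
  funext b
  by_cases hb : b ∈ B
  · exact hon b hb
  · rw [hout₁ b hb, hout₂ b hb]

theorem IsPackingSet.sum_pow_card_le (hB : IsPackingSet A t B) (hA0 : (0 : F) ∉ A)
    {𝒯 : Finset (Finset F)} (h𝒯 : ∀ T ∈ 𝒯, T ⊆ B ∧ T.card ≤ t) :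
    ∑ T ∈ 𝒯, A.card ^ T.card ≤ Fintype.card F := by
  rw [← Finset.card_univ]
  calc ∑ T ∈ 𝒯, A.card ^ T.card = (𝒯.biUnion (vectorsWithSupport A)).card := by
        rw [Finset.card_biUnion (pairwiseDisjoint_vectorsWithSupport hA0 _)]
        simp only [card_vectorsWithSupport]
    _ ≤ _ := Finset.card_le_card_of_injOn _ (fun _ _ => Finset.mem_coe.mpr (Finset.mem_univ _))
        (hB.injOn_syndrome h𝒯)

theorem IsPackingSet.choose_mul_pow_lt (hB : IsPackingSet A t B) (hA0 : (0 : F) ∉ A)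
    (ht : 0 < t) : B.card.choose t * A.card ^ t < Fintype.card F := by
  have hempty : (∅ : Finset F) ∉ B.powersetCard t := fun h =>
    ht.ne' (Finset.mem_powersetCard.mp h).2.symm
  have hbound := hB.sum_pow_card_le hA0 (𝒯 := insert ∅ (B.powersetCard t)) fun T hT => by
    rcases Finset.mem_insert.mp hT with rfl | hT
    · exact ⟨Finset.empty_subset B, Nat.zero_le t⟩
    · exact (Finset.mem_powersetCard.mp hT).imp id le_of_eq
  have hsum : ∑ T ∈ B.powersetCard t, A.card ^ T.card = B.card.choose t * A.card ^ t := by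
    rw [Finset.sum_congr rfl fun T hT => congrArg (A.card ^ ·) (Finset.mem_powersetCard.mp hT).2,
      Finset.sum_const, Finset.card_powersetCard, smul_eq_mul]
  rw [Finset.sum_insert hempty, hsum, Finset.card_empty, pow_zero] at hbound
  omega

end Packing

theorem upper_bound_B {F : Type*} [Field F] [Fintype F] [DecidableEq F]
    (A B : Finset F) (t : ℕ) (hA : 1 ≤ A.card) (hA0 : (0 : F) ∉ A) (ht : 0 < t)
    (hB : IsPackingSet A t B) :
    (B.card : ℝ) < t * ((Fintype.card F : ℝ) ^ ((1 : ℝ) / t) / A.card + 1) := by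
  have hroot_div_pos : 0 < (Fintype.card F : ℝ) ^ ((1 : ℝ) / t) / A.card := by positivity
  rcases le_or_gt B.card t with hBt | htB
  · have : (B.card : ℝ) ≤ t := by exact_mod_cast hBt
    nlinarith [(Nat.cast_pos.mpr ht : (0 : ℝ) < t)]
  · have hcount : B.card ^ t * A.card ^ t < t ^ t * Fintype.card F :=
      calc B.card ^ t * A.card ^ t ≤ t ^ t * (B.card.choose t * A.card ^ t) := by
            rw [← mul_assoc]; exact Nat.mul_le_mul_right _ (pow_le_pow_mul_choose htB.le)
        _ < t ^ t * Fintype.card F :=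
            Nat.mul_lt_mul_of_pos_left (hB.choose_mul_pow_lt hA0 ht) (Nat.pow_pos ht)
    have hlt := lt_mul_rpow_div_of_pow_mul_pow_lt ht hA hcount
    rw [mul_div_assoc] at hlt
    nlinarith [(Nat.cast_pos.mpr ht : (0 : ℝ) < t)]
end

section
/- Let q be a prime power, A ⊆ F_q^* of cardinality A ≥ 1, t a positive integer, and B a maximal (t,A,q)-packing set of cardinality B (maximal meaning that for every u ∈ F_q^* \ B, the set B ∪ {u} is not a (t,A,q)-packing set). Then Σ_{h=0}^{t} C(B+1,h) A^h · Σ_{k=1}^{t} C(B,k−1) A^k + B + 1 ≥ q. -/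
/-!
Every `u ∉ B ∪ {0}` is witnessed by a collision in `B ∪ {u}`: two admissible vectors with equal
weighted sums which, since `B` itself packs, differ at `u`; swapping them makes the second one
nonzero at `u`. Storing the `u`-coordinates at the coordinate `0` turns the pair into vectors on
the fixed set `B ∪ {0}`, and the collision equation is linear in `u`, so `u` is recovered from the
pair. Counting the pairs (weight `≤ t` on `|B| + 1` coordinates, resp. a nonzero entry at `0`
followed by weight `≤ t - 1` on `B`) gives `q - |B| - 1 ≤` the product in the statement.
-/

open Finset

section Relocate

variable {α β : Type*} [DecidableEq α] [Zero β]

def relocate (S : Finset α) (u p : α) (c : α → β) : α → β :=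
  fun x => if x ∈ S then c x else if x = p then c u else 0

variable {S : Finset α} {u p : α}

theorem relocate_of_mem (c : α → β) {x : α} (hx : x ∈ S) : relocate S u p c x = c x :=
  if_pos hx

theorem relocate_self (hp : p ∉ S) (c : α → β) : relocate S u p c p = c u := by
  simp [relocate, hp]

theorem relocate_of_notMem_insert (c : α → β) {x : α} (hx : x ∉ insert p S) :
    relocate S u p c x = 0 := by
  rw [mem_insert, not_or] at hx
  simp [relocate, hx.1, hx.2]

variable [DecidableEq β]

theorem card_filter_relocate_ne_zero (hu : u ∉ S) (hp : p ∉ S) (c : α → β) :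
    #{x ∈ insert p S | relocate S u p c x ≠ 0} = #{x ∈ insert u S | c x ≠ 0} := by
  have hS : {x ∈ S | relocate S u p c x ≠ 0} = {x ∈ S | c x ≠ 0} :=
    filter_congr fun x hx => by rw [relocate_of_mem c hx]
  rw [filter_insert, filter_insert, hS, relocate_self hp]
  split_ifs
  · rw [card_insert_of_notMem fun h => hp (mem_filter.mp h).1,
      card_insert_of_notMem fun h => hu (mem_filter.mp h).1]
  · rfl

end Relocate

section LowWeightVectors

variable {α β : Type*} [DecidableEq α] [Zero β] [DecidableEq β] [Fintype α] [Fintype β]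

def lowWeightVectors (A : Finset β) (S : Finset α) (n : ℕ) : Finset (α → β) :=
  {g | (∀ x ∉ S, g x = 0) ∧ (∀ x ∈ S, g x ∈ A ∨ g x = 0) ∧ #{x ∈ S | g x ≠ 0} < n}

theorem mem_lowWeightVectors {A : Finset β} {S : Finset α} {n : ℕ} {g : α → β} :
    g ∈ lowWeightVectors A S n ↔
      (∀ x ∉ S, g x = 0) ∧ (∀ x ∈ S, g x ∈ A ∨ g x = 0) ∧ #{x ∈ S | g x ≠ 0} < n := by
  simp [lowWeightVectors]

theorem card_filter_support_eq_le (A : Finset β) (S s : Finset α) (n : ℕ) :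
    #{g ∈ lowWeightVectors A S n | {x ∈ S | g x ≠ 0} = s} ≤ #A ^ #s := by
  have vanish : ∀ g : α → β, (∀ x ∉ S, g x = 0) → {x ∈ S | g x ≠ 0} = s → ∀ x ∉ s, g x = 0 := by
    rintro g hout rfl x hx
    by_contra hne
    exact hx (mem_filter.mpr ⟨by_contra fun hxS => hne (hout x hxS), hne⟩)
  rw [← prod_const, ← card_pi]
  refine card_le_card_of_injOn (fun g a _ => g a) ?_ ?_
  · intro g hg
    rw [mem_coe, mem_filter, mem_lowWeightVectors] at hg
    obtain ⟨⟨-, hA, -⟩, rfl⟩ := hg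
    rw [mem_coe, mem_pi]
    exact fun a ha => (hA a (mem_filter.mp ha).1).resolve_right (mem_filter.mp ha).2
  · intro g₁ hg₁ g₂ hg₂ h
    rw [mem_coe, mem_filter, mem_lowWeightVectors] at hg₁ hg₂
    funext x
    by_cases hx : x ∈ s
    · exact congr_fun₂ h x hx
    · rw [vanish g₁ hg₁.1.1 hg₁.2 x hx, vanish g₂ hg₂.1.1 hg₂.2 x hx]

theorem card_lowWeightVectors_le (A : Finset β) (S : Finset α) (n : ℕ) :
    #(lowWeightVectors A S n) ≤ ∑ h ∈ range n, (#S).choose h * #A ^ h := by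
  have hT : (lowWeightVectors A S n : Set (α → β)).MapsTo (fun g => {x ∈ S | g x ≠ 0})
      ((range n).biUnion (powersetCard · S)) := by
    intro g hg
    rw [mem_coe, mem_lowWeightVectors] at hg
    rw [mem_coe, mem_biUnion]
    exact ⟨_, mem_range.mpr hg.2.2, mem_powersetCard.mpr ⟨filter_subset _ _, rfl⟩⟩
  calc #(lowWeightVectors A S n)
      = ∑ s ∈ (range n).biUnion (powersetCard · S),
          #{g ∈ lowWeightVectors A S n | {x ∈ S | g x ≠ 0} = s} :=
        card_eq_sum_card_fiberwise hT
    _ ≤ ∑ s ∈ (range n).biUnion (powersetCard · S), #A ^ #s :=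
        sum_le_sum fun s _ => card_filter_support_eq_le A S s n
    _ = ∑ h ∈ range n, (#S).choose h * #A ^ h := by
        rw [sum_biUnion fun _ _ _ _ hij => pairwise_disjoint_powersetCard S hij]
        refine sum_congr rfl fun h _ => ?_
        rw [sum_congr rfl fun s hs => by rw [(mem_powersetCard.mp hs).2], sum_const,
          card_powersetCard, smul_eq_mul]

theorem card_filter_apply_ne_zero_le {S : Finset α} {p : α} (hp : p ∉ S) (A : Finset β)
    (n : ℕ) :
    #{g ∈ lowWeightVectors A (insert p S) (n + 1) | g p ≠ 0} ≤
      #A * #(lowWeightVectors A S n) := by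
  rw [← card_product]
  refine card_le_card_of_injOn (fun g => (g p, Function.update g p 0)) ?_ ?_
  · intro g hg
    rw [mem_coe, mem_filter, mem_lowWeightVectors, forall_mem_insert] at hg
    obtain ⟨⟨hout, ⟨hpA, hA⟩, hw⟩, hgp⟩ := hg
    have hne : ∀ x ∈ S, x ≠ p := fun x hx h => hp (h ▸ hx)
    simp only [mem_coe, mem_product, mem_lowWeightVectors]
    refine ⟨hpA.resolve_right hgp, fun x hx => ?_, fun x hx => ?_, ?_⟩
    · by_cases hxp : x = p
      · rw [hxp, Function.update_self]
      · rw [Function.update_of_ne hxp]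
        exact hout x (by simp [hxp, hx])
    · rw [Function.update_of_ne (hne x hx)]
      exact hA x hx
    · rw [filter_insert, if_pos hgp,
        card_insert_of_notMem fun h => hp (mem_filter.mp h).1] at hw
      rwa [filter_congr fun x hx => by rw [Function.update_of_ne (hne x hx)],
        ← Nat.succ_lt_succ_iff]
  · intro g₁ _ g₂ _ h
    obtain ⟨hgp, hupd⟩ := Prod.mk_inj.mp h
    funext x
    by_cases hx : x = p
    · rw [hx, hgp]
    · simpa [Function.update_of_ne hx] using congr_fun hupd x

theorem relocate_mem_lowWeightVectors {S : Finset α} {u p : α} (hu : u ∉ S) (hp : p ∉ S)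
    {A : Finset β} {n : ℕ} {c : α → β} (hA : ∀ x ∈ insert u S, c x ∈ A ∨ c x = 0)
    (hw : #{x ∈ insert u S | c x ≠ 0} < n) :
    relocate S u p c ∈ lowWeightVectors A (insert p S) n := by
  rw [mem_lowWeightVectors, forall_mem_insert, relocate_self hp,
    card_filter_relocate_ne_zero hu hp]
  refine ⟨fun x hx => relocate_of_notMem_insert c hx, ⟨hA u (mem_insert_self u S), ?_⟩, hw⟩
  exact fun x hx => relocate_of_mem c hx ▸ hA x (mem_insert_of_mem hx)

end LowWeightVectors

-- Solving `∑ b ∈ insert u B, a₁ b * b = ∑ b ∈ insert u B, a₂ b * b` for `u`, with the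
-- `u`-coordinates of `a₁`, `a₂` stored at `0`.
def collisionPoint {F : Type*} [Field F] (B : Finset F) (g : (F → F) × (F → F)) : F :=
  (∑ b ∈ B, g.2 b * b - ∑ b ∈ B, g.1 b * b) / (g.1 0 - g.2 0)

section Packing

variable {F : Type*} [Field F] [DecidableEq F] {A B : Finset F} {t : ℕ} {u : F}

theorem IsPackingSet.exists_of_not_isPackingSet_insert (hB : IsPackingSet A t B) (hu0 : u ≠ 0)
    (huB : u ∉ B) (h : ¬ IsPackingSet A t (insert u B)) :
    ∃ a₁ a₂ : F → F,
      (∀ b ∈ insert u B, a₁ b ∈ A ∨ a₁ b = 0) ∧ (∀ b ∈ insert u B, a₂ b ∈ A ∨ a₂ b = 0) ∧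
      #{b ∈ insert u B | a₁ b ≠ 0} ≤ t ∧ #{b ∈ insert u B | a₂ b ≠ 0} ≤ t ∧
      ∑ b ∈ insert u B, a₁ b * b = ∑ b ∈ insert u B, a₂ b * b ∧ a₁ u ≠ a₂ u ∧ a₂ u ≠ 0 := by
  have h0 : (0 : F) ∉ insert u B := by
    rw [mem_insert, not_or]
    exact ⟨hu0.symm, hB.2.1⟩
  simp only [IsPackingSet, insert_nonempty, h0, not_false_eq_true, true_and, not_forall] at h
  obtain ⟨a₁, a₂, hA₁, hA₂, hw₁, hw₂, hsum, b, hb, hne⟩ := h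
  have hu : a₁ u ≠ a₂ u := by
    intro hu
    rw [sum_insert huB, sum_insert huB, hu, add_right_inj] at hsum
    have hwB : ∀ a : F → F, #{b ∈ insert u B | a b ≠ 0} ≤ t → #{b ∈ B | a b ≠ 0} ≤ t :=
      fun a ha => (card_le_card (filter_subset_filter _ (subset_insert u B))).trans ha
    have hagree := hB.2.2 a₁ a₂ (fun b hb => hA₁ b (mem_insert_of_mem hb))
      (fun b hb => hA₂ b (mem_insert_of_mem hb)) (hwB a₁ hw₁) (hwB a₂ hw₂) hsum
    rcases mem_insert.mp hb with rfl | hb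
    · exact hne hu
    · exact hne (hagree b hb)
  by_cases ha₂ : a₂ u = 0
  · exact ⟨a₂, a₁, hA₂, hA₁, hw₂, hw₁, hsum.symm, hu.symm, ha₂ ▸ hu⟩
  · exact ⟨a₁, a₂, hA₁, hA₂, hw₁, hw₂, hsum, hu, ha₂⟩

theorem IsPackingSet.mem_image_of_not_isPackingSet_insert [Fintype F] (hB : IsPackingSet A t B)
    (hu0 : u ≠ 0) (huB : u ∉ B) (h : ¬ IsPackingSet A t (insert u B)) :
    u ∈ (lowWeightVectors A (insert 0 B) (t + 1) ×ˢ
        {g ∈ lowWeightVectors A (insert 0 B) (t + 1) | g 0 ≠ 0}).image (collisionPoint B) := by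
  obtain ⟨a₁, a₂, hA₁, hA₂, hw₁, hw₂, hsum, hne, ha₂⟩ :=
    hB.exists_of_not_isPackingSet_insert hu0 huB h
  have hB0 := hB.2.1
  refine mem_image.mpr ⟨(relocate B u 0 a₁, relocate B u 0 a₂), mem_product.mpr
    ⟨relocate_mem_lowWeightVectors huB hB0 hA₁ (Nat.lt_succ_of_le hw₁),
      mem_filter.mpr ⟨relocate_mem_lowWeightVectors huB hB0 hA₂ (Nat.lt_succ_of_le hw₂),
        by simpa only [relocate_self hB0]⟩⟩, ?_⟩
  have hsumB : ∀ a : F → F, ∑ b ∈ B, relocate B u 0 a b * b = ∑ b ∈ B, a b * b :=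
    fun a => sum_congr rfl fun b hb => by rw [relocate_of_mem a hb]
  rw [sum_insert huB, sum_insert huB] at hsum
  simp only [collisionPoint, hsumB, relocate_self hB0]
  rw [div_eq_iff (sub_ne_zero_of_ne hne)]
  linear_combination -hsum

end Packing

theorem Nat.mul_sum_range_choose_mul_pow (a m t : ℕ) :
    a * ∑ h ∈ range t, m.choose h * a ^ h = ∑ k ∈ Icc 1 t, m.choose (k - 1) * a ^ k := by
  rw [mul_sum, ← Ico_add_one_right_eq_Icc, sum_Ico_eq_sum_range, Nat.add_sub_cancel]
  refine sum_congr rfl fun h _ => ?_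
  rw [Nat.add_sub_cancel_left]
  ring

theorem lower_bound_general {F : Type*} [Field F] [Fintype F] [DecidableEq F]
    (A B : Finset F) (t : ℕ)
    (hB : IsMaximalPackingSet A t B) :
    (∑ h ∈ Finset.range (t + 1), (B.card + 1).choose h * A.card ^ h) *
        (∑ k ∈ Finset.Icc 1 t, B.card.choose (k - 1) * A.card ^ k) + B.card + 1 ≥
      Fintype.card F := by
  obtain ⟨hpack, hmax⟩ := hB
  have hB0 : (0 : F) ∉ B := hpack.2.1
  set P := lowWeightVectors A (insert 0 B) (t + 1)
  have hcover : univ \ insert 0 B ⊆ (P ×ˢ {g ∈ P | g 0 ≠ 0}).image (collisionPoint B) := by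
    intro u hu
    rw [mem_sdiff, mem_insert, not_or] at hu
    exact hpack.mem_image_of_not_isPackingSet_insert hu.2.1 hu.2.2 (hmax u hu.2.1 hu.2.2)
  have hP : #P ≤ ∑ h ∈ range (t + 1), (#B + 1).choose h * #A ^ h := by
    simpa only [card_insert_of_notMem hB0] using card_lowWeightVectors_le A (insert 0 B) (t + 1)
  have hP₀ : #{g ∈ P | g 0 ≠ 0} ≤ ∑ k ∈ Icc 1 t, (#B).choose (k - 1) * #A ^ k := by
    rw [← Nat.mul_sum_range_choose_mul_pow]
    exact (card_filter_apply_ne_zero_le hB0 A t).trans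
      (Nat.mul_le_mul_left _ (card_lowWeightVectors_le A B t))
  calc Fintype.card F = #(univ \ insert 0 B) + (#B + 1) := by
        rw [← card_insert_of_notMem hB0, card_sdiff_add_card_eq_card (subset_univ _), card_univ]
    _ ≤ #P * #{g ∈ P | g 0 ≠ 0} + (#B + 1) := by
        grw [card_le_card hcover, card_image_le, card_product]
    _ ≤ _ := by
        grw [hP, hP₀]
        omega

theorem lower_bound {F : Type*} [Field F] [Fintype F] [DecidableEq F]
    (A B : Finset F) (t : ℕ) (hA : 1 ≤ A.card) (hA0 : (0 : F) ∉ A) (ht : 0 < t)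
    (hB : IsMaximalPackingSet A t B) :
    (∑ h ∈ Finset.range (t + 1), (B.card + 1).choose h * A.card ^ h) *
        (∑ k ∈ Finset.Icc 1 t, B.card.choose (k - 1) * A.card ^ k) + B.card + 1 ≥
      Fintype.card F :=
  lower_bound_general A B t hB
end

section
/- Let q be a prime power, A ⊆ F_q^* of cardinality A, and let B be a (1,A,q)-packing set of cardinality B which is maximal (no u ∈ F_q^* \ B can be adjoined). Then B ≥ (q−1)/#(A/A) ≥ (q−1)/A^2, where A/A = {a·b^{-1} : a, b ∈ A} is the ratio set of A. -/
/-! For `t = 1`, `B` is a packing set exactly when `(a, b) ↦ a * b` is injective on `A × B`.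
Adjoining a nonzero `u ∉ (A / A) * B` keeps this map injective, so a maximal `B` satisfies
`F^* ⊆ (A / A) * B`, whence `q - 1 ≤ #(A / A) * #B ≤ #A ^ 2 * #B`. -/

open Finset
open scoped Pointwise

lemma eq_zero_or_exists_single_of_card_filter_ne_zero_le_one {ι M : Type*} [Zero M] [DecidableEq M]
    {C : Finset ι} {a : ι → M} (h : #(C.filter (a · ≠ 0)) ≤ 1) :
    (∀ b ∈ C, a b = 0) ∨ ∃ b₀ ∈ C, a b₀ ≠ 0 ∧ ∀ b ∈ C, b ≠ b₀ → a b = 0 := by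
  by_cases hzero : ∀ b ∈ C, a b = 0
  · exact .inl hzero
  push Not at hzero
  obtain ⟨b₀, hb₀, hab₀⟩ := hzero
  refine .inr ⟨b₀, hb₀, hab₀, fun b hb hne => ?_⟩
  by_contra hab
  exact hne (card_le_one.mp h b (mem_filter.mpr ⟨hb, hab⟩) b₀ (mem_filter.mpr ⟨hb₀, hab₀⟩))

lemma card_filter_single_ne_zero_le_one {ι M : Type*} [DecidableEq ι] [Zero M] [DecidableEq M]
    (C : Finset ι) (x : ι) (c : M) : #(C.filter ((Pi.single x c : ι → M) · ≠ 0)) ≤ 1 := by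
  refine card_le_one.mpr fun y hy z hz => ?_
  have key : ∀ w ∈ C.filter ((Pi.single x c : ι → M) · ≠ 0), w = x := fun w hw => by
    by_contra hne
    exact (mem_filter.mp hw).2 (by simp [hne])
  rw [key y hy, key z hz]

section Packing

variable {F : Type*} [Field F] [DecidableEq F] {A B : Finset F}

lemma isPackingSet_one_of_injOn (hB : B.Nonempty) (hB0 : (0 : F) ∉ B)
    (hinj : Set.InjOn (fun p : F × F => p.1 * p.2) ((A : Set F) ×ˢ (B : Set F))) :
    IsPackingSet A 1 B := by
  refine ⟨hB, hB0, fun a₁ a₂ hA₁ hA₂ w₁ w₂ hsum => ?_⟩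
  have sum_zero : ∀ a : F → F, (∀ b ∈ B, a b = 0) → ∑ b ∈ B, a b * b = 0 :=
    fun a ha => sum_eq_zero fun b hb => by rw [ha b hb, zero_mul]
  have sum_single : ∀ a : F → F, ∀ b₀ ∈ B, a b₀ ≠ 0 → (∀ b ∈ B, b ≠ b₀ → a b = 0) →
      ∑ b ∈ B, a b * b ≠ 0 ∧ ∑ b ∈ B, a b * b = a b₀ * b₀ := fun a b₀ hb₀ ha₀ ha => by
    rw [sum_eq_single_of_mem b₀ hb₀ fun b hb hne => by rw [ha b hb hne, zero_mul]]
    exact ⟨mul_ne_zero ha₀ fun h => hB0 (h ▸ hb₀), rfl⟩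
  rcases eq_zero_or_exists_single_of_card_filter_ne_zero_le_one w₁ with z₁ | ⟨b₁, hb₁, ne₁, z₁⟩ <;>
    rcases eq_zero_or_exists_single_of_card_filter_ne_zero_le_one w₂ with z₂ | ⟨b₂, hb₂, ne₂, z₂⟩
  · exact fun b hb => by rw [z₁ b hb, z₂ b hb]
  · exact absurd (hsum ▸ sum_zero a₁ z₁) (sum_single a₂ b₂ hb₂ ne₂ z₂).1
  · exact absurd (hsum ▸ sum_zero a₂ z₂) (sum_single a₁ b₁ hb₁ ne₁ z₁).1
  · rw [(sum_single a₁ b₁ hb₁ ne₁ z₁).2, (sum_single a₂ b₂ hb₂ ne₂ z₂).2] at hsum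
    obtain ⟨ha, rfl⟩ := Prod.ext_iff.mp <|
      hinj (Set.mk_mem_prod ((hA₁ b₁ hb₁).resolve_right ne₁) hb₁)
        (Set.mk_mem_prod ((hA₂ b₂ hb₂).resolve_right ne₂) hb₂) hsum
    intro b hb
    by_cases hbb : b = b₁
    · exact hbb ▸ ha
    · rw [z₁ b hb hbb, z₂ b hb hbb]

lemma injOn_mul_of_isPackingSet_one (hA0 : (0 : F) ∉ A) (h : IsPackingSet A 1 B) :
    Set.InjOn (fun p : F × F => p.1 * p.2) ((A : Set F) ×ˢ (B : Set F)) := by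
  rintro ⟨a, b⟩ ⟨ha, hb⟩ ⟨a', b'⟩ ⟨ha', hb'⟩ (hab : a * b = a' * b')
  have entries : ∀ x, ∀ c ∈ A, ∀ y ∈ B,
      (Pi.single x c : F → F) y ∈ A ∨ (Pi.single x c : F → F) y = 0 := fun x c hc y _ => by
    rw [Pi.single_apply]
    split_ifs <;> simp [hc]
  have sum_single : ∀ x ∈ B, ∀ c : F, ∑ y ∈ B, (Pi.single x c : F → F) y * y = c * x :=
      fun x hx c => by
    rw [sum_eq_single_of_mem x hx fun y _ hne => by rw [Pi.single_eq_of_ne hne, zero_mul],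
      Pi.single_eq_same]
  have heq := h.2.2 (Pi.single b a) (Pi.single b' a') (entries b a ha) (entries b' a' ha')
    (card_filter_single_ne_zero_le_one B b a) (card_filter_single_ne_zero_le_one B b' a')
    (by rw [sum_single b hb, sum_single b' hb', hab]) b hb
  obtain rfl : b = b' := by
    by_contra hne
    rw [Pi.single_eq_same, Pi.single_eq_of_ne hne] at heq
    exact hA0 (heq ▸ ha)
  simpa using heq

lemma isPackingSet_one_iff (hA0 : (0 : F) ∉ A) :
    IsPackingSet A 1 B ↔ B.Nonempty ∧ (0 : F) ∉ B ∧
      Set.InjOn (fun p : F × F => p.1 * p.2) ((A : Set F) ×ˢ (B : Set F)) :=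
  ⟨fun h => ⟨h.1, h.2.1, injOn_mul_of_isPackingSet_one hA0 h⟩,
    fun ⟨hB, hB0, hinj⟩ => isPackingSet_one_of_injOn hB hB0 hinj⟩

lemma injOn_mul_insert {u : F} (hA0 : (0 : F) ∉ A) (hu : u ≠ 0) (huAB : u ∉ A / A * B)
    (hinj : Set.InjOn (fun p : F × F => p.1 * p.2) ((A : Set F) ×ˢ (B : Set F))) :
    Set.InjOn (fun p : F × F => p.1 * p.2) ((A : Set F) ×ˢ (insert u B : Set F)) := by
  have not_collide : ∀ {a a' b'}, a ∈ A → a' ∈ A → b' ∈ B → a * u ≠ a' * b' :=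
    fun {a a' b'} ha ha' hb' hab => huAB <| mem_mul.mpr ⟨a' / a, div_mem_div ha' ha, b', hb', by
      have : a ≠ 0 := fun h => hA0 (h ▸ ha)
      field_simp
      exact hab.symm⟩
  rintro ⟨a, b⟩ ⟨ha, hb⟩ ⟨a', b'⟩ ⟨ha', hb'⟩ (hab : a * b = a' * b')
  rcases hb with rfl | hb <;> rcases hb' with rfl | hb'
  · rw [mul_right_cancel₀ hu hab]
  · exact absurd hab (not_collide ha ha' hb')
  · exact absurd hab.symm (not_collide ha' ha hb)
  · exact hinj ⟨ha, hb⟩ ⟨ha', hb'⟩ hab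

lemma compl_zero_subset_div_mul [Fintype F] (hA : A.Nonempty) (hA0 : (0 : F) ∉ A)
    (hB : IsMaximalPackingSet A 1 B) : ({0}ᶜ : Finset F) ⊆ A / A * B := by
  intro u hu
  rw [mem_compl, mem_singleton] at hu
  by_contra huAB
  by_cases huB : u ∈ B
  · obtain ⟨a, ha⟩ := hA
    have hone : (1 : F) ∈ A / A := div_self (fun h : a = 0 => hA0 (h ▸ ha)) ▸ div_mem_div ha ha
    exact huAB (mem_mul.mpr ⟨1, hone, u, huB, one_mul u⟩)
  · obtain ⟨-, hB0, hinj⟩ := (isPackingSet_one_iff hA0).mp hB.1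
    refine hB.2 u hu huB ((isPackingSet_one_iff hA0).mpr ⟨insert_nonempty u B, ?_, ?_⟩)
    · simpa [eq_comm] using ⟨hu, hB0⟩
    · simpa using injOn_mul_insert hA0 hu huAB hinj

lemma card_sub_one_le_card_div_mul_card [Fintype F] (hA : A.Nonempty) (hA0 : (0 : F) ∉ A)
    (hB : IsMaximalPackingSet A 1 B) : Fintype.card F - 1 ≤ #(A / A) * #B :=
  calc Fintype.card F - 1 = #({0}ᶜ : Finset F) := by rw [card_compl, card_singleton]
    _ ≤ #(A / A * B) := card_le_card (compl_zero_subset_div_mul hA hA0 hB)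
    _ ≤ #(A / A) * #B := card_mul_le

end Packing

theorem lower_bound_t_one {F : Type*} [Field F] [Fintype F] [DecidableEq F]
    (A B : Finset F) (hA : A.Nonempty) (hA0 : (0 : F) ∉ A)
    (hB : IsMaximalPackingSet A 1 B) :
    (B.card : ℝ) ≥ (Fintype.card F - 1) /
        ((Finset.image (fun x : F × F => x.1 * x.2⁻¹) (A ×ˢ A)).card : ℝ) ∧
      ((Fintype.card F - 1 : ℝ) /
          ((Finset.image (fun x : F × F => x.1 * x.2⁻¹) (A ×ˢ A)).card : ℝ)) ≥
        (Fintype.card F - 1) / (A.card : ℝ) ^ 2 := by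
  have hratio : image (fun x : F × F => x.1 * x.2⁻¹) (A ×ˢ A) = A / A := by
    rw [div_def]
    simp only [div_eq_mul_inv]
  have hq : (Fintype.card F - 1 : ℝ) = ((Fintype.card F - 1 : ℕ) : ℝ) := by
    rw [Nat.cast_sub Fintype.card_pos, Nat.cast_one]
  have hpos : (0 : ℝ) < #(A / A) := by exact_mod_cast (hA.div hA).card_pos
  rw [hratio, ge_iff_le, ge_iff_le, div_le_iff₀ hpos, hq]
  constructor
  · exact_mod_cast (card_sub_one_le_card_div_mul_card hA hA0 hB).trans_eq (mul_comm _ _)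
  · exact div_le_div_of_nonneg_left (Nat.cast_nonneg _) hpos
      (by exact_mod_cast card_div_le.trans_eq (sq #A).symm)
end

section
/- Let q be a prime power, g ∈ F_q^* an element of multiplicative order k ≥ 2, d = ceil(sqrt(k)), and A = {g, g^2, …, g^d, g^{2d}, g^{3d}, …, g^{(d−1)d}, g^{d^2}}. Then the ratio set A/A equals the cyclic subgroup of F_q^* of order k generated by g, and #A ≤ 2d − 1. -/
/-!
Every `m < k ≤ d²` is `j d - i` with `1 ≤ j, i ≤ d`, so `g ^ m = g ^ (j d) / g ^ i` is a ratio
of two elements of `A`; conversely every ratio of powers of `g` is again a power of `g`, and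
`g` has exactly `k` distinct powers.
-/

open Finset Submonoid

def babyGiantSteps (d : ℕ) : Finset ℕ :=
  Icc 1 d ∪ (Icc 2 d).image (· * d)

theorem card_babyGiantSteps_le (d : ℕ) : #(babyGiantSteps d) ≤ 2 * d - 1 :=
  calc #(babyGiantSteps d) ≤ #(Icc 1 d) + #((Icc 2 d).image (· * d)) := card_union_le _ _
    _ ≤ #(Icc 1 d) + #(Icc 2 d) := Nat.add_le_add_left card_image_le _
    _ ≤ 2 * d - 1 := by simp only [Nat.card_Icc]; omega

theorem exists_mem_babyGiantSteps_add_eq {d m : ℕ} (hm : m < d * d) :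
    ∃ a ∈ babyGiantSteps d, ∃ b ∈ babyGiantSteps d, m + b = a := by
  have hd : 0 < d := Nat.pos_of_mul_pos_left (m.zero_le.trans_lt hm)
  have hq : m / d < d := Nat.div_lt_of_lt_mul hm
  have hr : m % d < d := Nat.mod_lt m hd
  have hdiv := Nat.div_add_mod m d
  refine ⟨(m / d + 1) * d, ?_, d - m % d, mem_union_left _ (mem_Icc.2 ⟨by omega, by omega⟩), ?_⟩
  · rcases Nat.eq_zero_or_pos (m / d) with h0 | hpos
    · rw [h0, zero_add, one_mul]
      exact mem_union_left _ (mem_Icc.2 ⟨hd, le_rfl⟩)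
    · exact mem_union_right _ (mem_image.2 ⟨m / d + 1, mem_Icc.2 ⟨by omega, by omega⟩, rfl⟩)
  · rw [add_mul, one_mul, mul_comm]
    omega

section DivisionMonoid

variable {G : Type*} [DivisionMonoid G] {g : G}

theorem IsOfFinOrder.inv_eq_pow (hg : IsOfFinOrder g) : g⁻¹ = g ^ (orderOf g - 1) := by
  rw [← hg.val_inv_unit, Units.val_inv_eq_inv_val, hg.val_unit]

theorem IsOfFinOrder.pow_mul_inv_pow_mem_powers (hg : IsOfFinOrder g) (a b : ℕ) :
    g ^ a * (g ^ b)⁻¹ ∈ powers g := by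
  rw [← inv_pow, hg.inv_eq_pow, ← pow_mul]
  exact ⟨a + (orderOf g - 1) * b, pow_add g _ _⟩

theorem IsOfFinOrder.image_div_pow_eq_range [DecidableEq G] (hg : IsOfFinOrder g)
    {S : Finset ℕ} (hS : ∀ m < orderOf g, ∃ a ∈ S, ∃ b ∈ S, m + b = a) :
    image (fun x : G × G => x.1 * x.2⁻¹) (S.image (g ^ ·) ×ˢ S.image (g ^ ·)) =
      (range (orderOf g)).image (g ^ ·) := by
  ext x
  rw [← hg.mem_powers_iff_mem_range_orderOf]
  constructor
  · simp only [mem_image, mem_product, Prod.exists]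
    rintro ⟨_, _, ⟨⟨a, -, rfl⟩, ⟨b, -, rfl⟩⟩, rfl⟩
    exact hg.pow_mul_inv_pow_mem_powers a b
  · rw [hg.mem_powers_iff_mem_range_orderOf, mem_image]
    rintro ⟨m, hm, rfl⟩
    obtain ⟨a, ha, b, hb, rfl⟩ := hS m (mem_range.1 hm)
    refine mem_image.2 ⟨(g ^ (m + b), g ^ b), mem_product.2 ⟨mem_image_of_mem _ ha,
      mem_image_of_mem _ hb⟩, ?_⟩
    rw [pow_add, mul_assoc, (hg.isUnit.pow b).mul_inv_cancel, mul_one]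

end DivisionMonoid

theorem le_ceil_sqrt_mul_self (k : ℕ) : k ≤ ⌈Real.sqrt k⌉₊ * ⌈Real.sqrt k⌉₊ := by
  have h := (Real.sqrt_le_left (Nat.cast_nonneg _)).1 (Nat.le_ceil (Real.sqrt k))
  exact_mod_cast h.trans_eq (sq _)

theorem ratio_set_subgroup_general {F : Type*} [Field F] [DecidableEq F]
    (g : F) (k d : ℕ) (hk : orderOf g = k) (hk2 : 2 ≤ k) (hd : d = ⌈Real.sqrt k⌉₊) :
    Finset.image (fun x : F × F => x.1 * x.2⁻¹)
        ((Finset.image (g ^ ·) (Finset.Icc 1 d ∪ (Finset.Icc 2 d).image (· * d))) ×ˢ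
          (Finset.image (g ^ ·) (Finset.Icc 1 d ∪ (Finset.Icc 2 d).image (· * d)))) =
      (Finset.range k).image (g ^ ·) ∧
    (Finset.image (g ^ ·) (Finset.Icc 1 d ∪ (Finset.Icc 2 d).image (· * d))).card ≤
      2 * d - 1 := by
  have hg : IsOfFinOrder g := orderOf_pos_iff.1 (by omega)
  have hkd : k ≤ d * d := hd ▸ le_ceil_sqrt_mul_self k
  refine ⟨?_, card_image_le.trans (card_babyGiantSteps_le d)⟩
  subst hk
  exact hg.image_div_pow_eq_range fun m hm => exists_mem_babyGiantSteps_add_eq (hm.trans_le hkd)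

theorem ratio_set_subgroup {F : Type*} [Field F] [Fintype F] [DecidableEq F]
    (g : F) (k d : ℕ) (hk : orderOf g = k) (hk2 : 2 ≤ k) (hd : d = ⌈Real.sqrt k⌉₊) :
    Finset.image (fun x : F × F => x.1 * x.2⁻¹)
        ((Finset.image (g ^ ·) (Finset.Icc 1 d ∪ (Finset.Icc 2 d).image (· * d))) ×ˢ
          (Finset.image (g ^ ·) (Finset.Icc 1 d ∪ (Finset.Icc 2 d).image (· * d)))) =
      (Finset.range k).image (g ^ ·) ∧
    (Finset.image (g ^ ·) (Finset.Icc 1 d ∪ (Finset.Icc 2 d).image (· * d))).card ≤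
      2 * d - 1 :=
  ratio_set_subgroup_general g k d hk hk2 hd
end

section
/- Let q ≥ 11 be a prime power, A ⊆ F_q^* of cardinality A ≥ 1, t ≥ 2 a positive integer, and B a maximal (t,A,q)-packing set of cardinality B with AB ≥ 2. Then B > (q/(5A))^{1/(2t−1)}/A − 1. -/
/-
If `u ∉ B ∪ {0}`, maximality gives two words on `B ∪ {u}` of weight at most `t` with the same
syndrome that differ at `u`; we may take the second one nonzero at `u`. Solving
`α₁ u + S₁ = α₂ u + S₂` for `u` expresses it as `(S₁ - S₂) / α₂` with `S₁` a syndrome of weight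
`≤ t` and `S₂` one of weight `≤ t - 1`, or as `(S₁ - S₂) / (α₂ - α₁)` with both of weight
`≤ t - 1`, since a nonzero coordinate at `u` uses up one unit of weight. There are at most
`M ^ k` syndromes of weight `≤ k`, where `M = |A| (|B| + 1)`, so `q ≤ 3 |A| M ^ (2t - 1)`, and
taking `(2t - 1)`-th roots gives `|A| (|B| + 1) > (q / (5 |A|)) ^ (1 / (2t - 1))`.
-/

open Finset Pointwise

theorem sum_mem_card_nsmul {ι M : Type*} [AddCommMonoid M] [DecidableEq M] (I : Finset ι)
    {f : ι → M} {s : Finset M} (h : ∀ i ∈ I, f i ∈ s) : ∑ i ∈ I, f i ∈ #I • s := by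
  classical
  induction I using Finset.induction_on with
  | empty => simp
  | insert i I hi ih =>
    rw [sum_insert hi, card_insert_of_notMem hi, succ_nsmul']
    exact add_mem_add (h i (mem_insert_self i I)) (ih fun j hj => h j (mem_insert_of_mem hj))

section

variable {F : Type*} [Field F] [DecidableEq F] {A B : Finset F} {t : ℕ} {u : F}

/-- A vector of `(A ∪ {0}) ^ S` of Hamming weight at most `t`, as a function on all of `F`. -/
def IsWord (A : Finset F) (t : ℕ) (S : Finset F) (c : F → F) : Prop :=
  (∀ b ∈ S, c b ∈ A ∨ c b = 0) ∧ #{b ∈ S | c b ≠ 0} ≤ t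

theorem IsWord.mono {S S' : Finset F} {c : F → F} (hc : IsWord A t S' c) (h : S ⊆ S') :
    IsWord A t S c :=
  ⟨fun b hb => hc.1 b (h hb), (card_le_card (filter_subset_filter _ h)).trans hc.2⟩

/-- Contains the syndromes of weight at most `k`, and more: summands `a * b` may repeat `b`. -/
def syndromes (A B : Finset F) (k : ℕ) : Finset F := k • insert 0 (A * B)

theorem sum_mul_mem_syndromes {c : F → F} {k : ℕ} (hc : IsWord A k B c) :
    ∑ b ∈ B, c b * b ∈ syndromes A B k := by
  rw [← sum_filter_of_ne fun b _ hb => left_ne_zero_of_mul hb]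
  refine nsmul_subset_nsmul_right (mem_insert_self 0 _) hc.2
    (sum_mem_card_nsmul _ fun b hb => ?_)
  obtain ⟨hbB, hcb⟩ := mem_filter.mp hb
  exact mem_insert_of_mem (mul_mem_mul ((hc.1 b hbB).resolve_right hcb) hbB)

theorem sum_mul_mem_syndromes_of_insert {c : F → F} (huB : u ∉ B)
    (hc : IsWord A t (insert u B) c) :
    ∑ b ∈ B, c b * b ∈ syndromes A B (if c u = 0 then t else t - 1) := by
  refine sum_mul_mem_syndromes ⟨fun b hb => hc.1 b (mem_insert_of_mem hb), ?_⟩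
  have hw := hc.2
  rw [filter_insert] at hw
  by_cases hcu : c u = 0
  · rw [if_neg (not_not.mpr hcu)] at hw
    rwa [if_pos hcu]
  · rw [if_pos hcu, card_insert_of_notMem fun h => huB (mem_filter.mp h).1] at hw
    rw [if_neg hcu]
    omega

theorem card_syndromes_le (hA : 1 ≤ #A) (k : ℕ) :
    #(syndromes A B k) ≤ (#A * (#B + 1)) ^ k := by
  refine card_nsmul_le.trans (Nat.pow_le_pow_left ?_ k)
  calc #(insert 0 (A * B)) ≤ #A * #B + 1 :=
        (card_insert_le _ _).trans (Nat.add_le_add_right card_mul_le 1)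
    _ ≤ #A * (#B + 1) := by nlinarith

theorem IsPackingSet.exists_collision_of_not_isPackingSet_insert (hB : IsPackingSet A t B)
    (hu0 : u ≠ 0) (huB : u ∉ B) (hnot : ¬ IsPackingSet A t (insert u B)) :
    ∃ c₁ c₂ : F → F, IsWord A t (insert u B) c₁ ∧ IsWord A t (insert u B) c₂ ∧
      ∑ b ∈ insert u B, c₁ b * b = ∑ b ∈ insert u B, c₂ b * b ∧ c₁ u ≠ c₂ u := by
  by_contra! h
  refine hnot ⟨insert_nonempty u B, by simp [hu0.symm, hB.2.1],
    fun c₁ c₂ h₁ h₂ hw₁ hw₂ hsum => ?_⟩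
  have hcu := h c₁ c₂ ⟨h₁, hw₁⟩ ⟨h₂, hw₂⟩ hsum
  rw [sum_insert huB, sum_insert huB, hcu, add_right_inj] at hsum
  have hB' := hB.2.2 c₁ c₂ (fun b hb => h₁ b (mem_insert_of_mem hb))
    (fun b hb => h₂ b (mem_insert_of_mem hb)) (IsWord.mono ⟨h₁, hw₁⟩ (subset_insert u B)).2
    (IsWord.mono ⟨h₂, hw₂⟩ (subset_insert u B)).2 hsum
  intro b hb
  rcases mem_insert.mp hb with rfl | hb
  exacts [hcu, hB' b hb]

theorem IsMaximalPackingSet.mem_cover (hB : IsMaximalPackingSet A t B) (u : F) :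
    u ∈ insert 0 B ∪ (syndromes A B t - syndromes A B (t - 1)) / A ∪
      (syndromes A B (t - 1) - syndromes A B (t - 1)) / (A - A) := by
  by_cases hu0 : u = 0
  · simp [hu0]
  by_cases huB : u ∈ B
  · simp [huB]
  obtain ⟨c₁, c₂, h₁, h₂, hsum, hne⟩ :=
    hB.1.exists_collision_of_not_isPackingSet_insert hu0 huB (hB.2 u hu0 huB)
  wlog hc₂ : c₂ u ≠ 0 generalizing c₁ c₂
  · exact this c₂ c₁ h₂ h₁ hsum.symm hne.symm (by rwa [not_not.mp hc₂] at hne)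
  have hS₁ := sum_mul_mem_syndromes_of_insert huB h₁
  have hS₂ := sum_mul_mem_syndromes_of_insert huB h₂
  rw [if_neg hc₂] at hS₂
  have hα₂ : c₂ u ∈ A := (h₂.1 u (mem_insert_self u B)).resolve_right hc₂
  rw [sum_insert huB, sum_insert huB] at hsum
  have hu_eq : u = ((∑ b ∈ B, c₁ b * b) - ∑ b ∈ B, c₂ b * b) / (c₂ u - c₁ u) := by
    rw [eq_div_iff (sub_ne_zero.mpr hne.symm)]
    linear_combination -hsum
  rw [hu_eq, mem_union, mem_union]
  by_cases hc₁ : c₁ u = 0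
  · rw [if_pos hc₁] at hS₁
    rw [hc₁, sub_zero]
    exact Or.inl (Or.inr (div_mem_div (sub_mem_sub hS₁ hS₂) hα₂))
  · rw [if_neg hc₁] at hS₁
    have hα₁ : c₁ u ∈ A := (h₁.1 u (mem_insert_self u B)).resolve_right hc₁
    exact Or.inr (div_mem_div (sub_mem_sub hS₁ hS₂) (sub_mem_sub hα₂ hα₁))

theorem IsMaximalPackingSet.card_le [Fintype F] (hB : IsMaximalPackingSet A t B) (hA : 1 ≤ #A)
    (ht : 1 ≤ t) : Fintype.card F ≤ 3 * (#A * (#A * (#B + 1)) ^ (2 * t - 1)) := by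
  obtain ⟨k, rfl⟩ : ∃ k, t = k + 1 := ⟨t - 1, by omega⟩
  rw [show 2 * (k + 1) - 1 = 2 * k + 1 by omega]
  set M := #A * (#B + 1)
  have hAM : #A ≤ M := Nat.le_mul_of_pos_right _ (Nat.succ_pos _)
  have hBM : #B + 1 ≤ M := Nat.le_mul_of_pos_left _ hA
  have hT := card_syndromes_le (B := B) hA
  have hM_le : M ≤ #A * M ^ (2 * k + 1) :=
    (Nat.le_self_pow (by omega) M).trans (Nat.le_mul_of_pos_left _ hA)
  have hAA_le : M ^ k * M ^ k * (#A * #A) ≤ #A * M ^ (2 * k + 1) :=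
    calc M ^ k * M ^ k * (#A * #A) ≤ M ^ k * M ^ k * (M * #A) := by gcongr
      _ = #A * M ^ (2 * k + 1) := by ring
  calc Fintype.card F = #(univ : Finset F) := card_univ.symm
    _ ≤ #(insert 0 B ∪ (syndromes A B (k + 1) - syndromes A B k) / A ∪
          (syndromes A B k - syndromes A B k) / (A - A)) :=
      card_le_card fun u _ => hB.mem_cover u
    _ ≤ #(insert 0 B) + #((syndromes A B (k + 1) - syndromes A B k) / A) +
          #((syndromes A B k - syndromes A B k) / (A - A)) :=
      (card_union_le _ _).trans (Nat.add_le_add_right (card_union_le _ _) _)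
    _ ≤ (#B + 1) + M ^ (k + 1) * M ^ k * #A + M ^ k * M ^ k * (#A * #A) := by
      gcongr
      · exact card_insert_le _ _
      · exact card_div_le.trans
          (Nat.mul_le_mul (card_sub_le.trans (Nat.mul_le_mul (hT _) (hT _))) le_rfl)
      · exact card_div_le.trans
          (Nat.mul_le_mul (card_sub_le.trans (Nat.mul_le_mul (hT _) (hT _))) card_sub_le)
    _ ≤ 3 * (#A * M ^ (2 * k + 1)) := by
      have : M ^ (k + 1) * M ^ k * #A = #A * M ^ (2 * k + 1) := by ring
      omega

end

theorem lower_bound_cor_general {F : Type*} [Field F] [Fintype F] [DecidableEq F]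
    (A B : Finset F) (t : ℕ)
    (hA : 1 ≤ A.card) (ht : 2 ≤ t)
    (hB : IsMaximalPackingSet A t B) :
    (B.card : ℝ) >
      ((Fintype.card F : ℝ) / (5 * A.card)) ^ ((1 : ℝ) / (2 * t - 1)) / A.card - 1 := by
  have hcard := hB.card_le hA (by omega)
  set M := A.card * (B.card + 1)
  have hA' : (0 : ℝ) < A.card := by exact_mod_cast hA
  have hq : (Fintype.card F : ℝ) / (5 * A.card) < (M : ℝ) ^ (2 * t - 1) := by
    have : 0 < A.card * M ^ (2 * t - 1) := by positivity
    rw [div_lt_iff₀ (by positivity), mul_comm, mul_assoc]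
    exact_mod_cast (by omega : Fintype.card F < 5 * (A.card * M ^ (2 * t - 1)))
  have hn : ((2 * t - 1 : ℕ) : ℝ) = 2 * t - 1 := by
    rw [Nat.cast_sub (by omega)]
    push_cast
    ring
  have hroot : ((Fintype.card F : ℝ) / (5 * A.card)) ^ ((1 : ℝ) / (2 * t - 1)) < M := by
    rwa [one_div, ← hn, Real.rpow_inv_lt_iff_of_pos (by positivity) (by positivity)
      (Nat.cast_pos.mpr (by omega)), Real.rpow_natCast]
  rw [gt_iff_lt, sub_lt_iff_lt_add, div_lt_iff₀ hA']
  simpa [M, mul_comm] using hroot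

theorem lower_bound_cor {F : Type*} [Field F] [Fintype F] [DecidableEq F]
    (A B : Finset F) (t : ℕ) (hq : 11 ≤ Fintype.card F)
    (hA : 1 ≤ A.card) (hA0 : (0 : F) ∉ A) (ht : 2 ≤ t)
    (hAB : 2 ≤ A.card * B.card) (hB : IsMaximalPackingSet A t B) :
    (B.card : ℝ) >
      ((Fintype.card F : ℝ) / (5 * A.card)) ^ ((1 : ℝ) / (2 * t - 1)) / A.card - 1 :=
  lower_bound_cor_general A B t hA ht hB
end
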